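/- arXiv:0805.2166 — 6 statements merged into one kernel-verified Lean document; each statement's English description precedes it below -/
import Mathlib

section
/- Let A be a unital C*-algebra and u ∈ A. If ‖u u* + x x*‖ = 1 + ‖x‖² for every x ∈ A with ‖x‖ = 1, then u u* = 1 (u is a coisometry). -/
/-!
Put `a = u u*`, a positive element. For positive `b` the spectrum of `1 + b` contains `1 + ‖b‖`,
so `‖1 + b‖ = 1 + ‖b‖`; taking `x = 1` therefore gives `‖a‖ = 1`, i.e. `0 ≤ 1 - a ≤ 1`.
If `b = 1 - a ≠ 0`, then `x = √(b / ‖b‖)` has norm one and `x x* = b / ‖b‖`, and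
`a + x x* = 1 + (‖b‖⁻¹ - 1) b` has norm `2 - ‖b‖ < 2 = 1 + ‖x‖²`.
-/

namespace CStarAlgebra

variable {A : Type*} [CStarAlgebra A] [PartialOrder A] [StarOrderedRing A]

lemma norm_one_add_of_nonneg [Nontrivial A] {b : A} (hb : 0 ≤ b) : ‖1 + b‖ = 1 + ‖b‖ := by
  refine le_antisymm ((norm_add_le _ _).trans (by rw [norm_one])) ?_
  have hspec : 1 + ‖b‖ ∈ spectrum ℝ (1 + b) := by
    rw [← map_one (algebraMap ℝ A), ← spectrum.singleton_add_eq]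
    exact Set.add_mem_add rfl (norm_mem_spectrum_of_nonneg hb)
  calc 1 + ‖b‖ ≤ ‖1 + ‖b‖‖ := Real.le_norm_self _
    _ ≤ ‖1 + b‖ := spectrum.norm_le_norm_of_mem hspec

lemma exists_mul_star_eq_of_nonneg {c : A} (hc : 0 ≤ c) :
    ∃ x : A, x * star x = c ∧ ‖x‖ = √‖c‖ :=
  ⟨CFC.sqrt c, by rw [(CFC.sqrt_nonneg c).isSelfAdjoint.star_eq, CFC.sqrt_mul_sqrt_self c hc],
    CFC.norm_sqrt c hc⟩

lemma norm_one_sub_add_inv_norm_smul [Nontrivial A] {b : A} (hb : 0 ≤ b) (hb0 : b ≠ 0)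
    (hb1 : ‖b‖ ≤ 1) : ‖(1 - b) + ‖b‖⁻¹ • b‖ = 2 - ‖b‖ := by
  have hpos : 0 < ‖b‖ := norm_pos_iff.2 hb0
  have hcoef : 0 ≤ ‖b‖⁻¹ - 1 := sub_nonneg.2 (one_le_inv₀ hpos |>.2 hb1)
  have hrw : (1 - b) + ‖b‖⁻¹ • b = 1 + (‖b‖⁻¹ - 1) • b := by
    rw [sub_smul, one_smul]; abel
  rw [hrw, norm_one_add_of_nonneg (smul_nonneg hcoef hb), norm_smul, Real.norm_of_nonneg hcoef,
    sub_mul, inv_mul_cancel₀ hpos.ne']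
  ring

end CStarAlgebra

open CStarAlgebra in
/-- If `‖u u* + x x*‖ = 1 + ‖x‖²` for every norm-one `x` in a unital C*-algebra,
then `u` is a coisometry: `u u* = 1`. -/
theorem stmt4 {A : Type*} [CStarAlgebra A] (u : A)
    (h : ∀ x : A, ‖x‖ = 1 → ‖u * star u + x * star x‖ = 1 + ‖x‖ ^ 2) :
    u * star u = 1 := by
  nontriviality A
  let _ := CStarAlgebra.spectralOrder A
  let _ := CStarAlgebra.spectralOrderedRing A
  set a := u * star u
  have ha : 0 ≤ a := mul_star_self_nonneg u
  have ha1 : ‖a‖ = 1 := by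
    have h1 := h 1 norm_one
    rw [star_one, mul_one, norm_one, add_comm, norm_one_add_of_nonneg ha] at h1
    linarith
  set b := 1 - a with hb_def
  have hb : 0 ≤ b := sub_nonneg.2 ((norm_le_one_iff_of_nonneg a).1 ha1.le)
  have hb1 : ‖b‖ ≤ 1 := (norm_le_one_iff_of_nonneg b).2 (sub_le_self 1 ha)
  by_contra hne
  have hb0 : b ≠ 0 := sub_ne_zero.2 (Ne.symm hne)
  obtain ⟨x, hxx, hx⟩ :=
    exists_mul_star_eq_of_nonneg (smul_nonneg (inv_nonneg.2 (norm_nonneg b)) hb)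
  rw [norm_smul, norm_inv, norm_norm, inv_mul_cancel₀ (norm_ne_zero_iff.2 hb0),
    Real.sqrt_one] at hx
  have key := h x hx
  rw [hxx, hx, ← sub_sub_cancel 1 a, ← hb_def, norm_one_sub_add_inv_norm_smul hb hb0 hb1] at key
  linarith [norm_pos_iff.2 hb0]
end

section
/- Let A be a unital C*-algebra and u ∈ A. If ‖u* u + x* x‖ = 1 + ‖x‖² for every x ∈ A with ‖x‖ = 1, then u* u = 1 (u is an isometry). -/
/-- If `‖u* u + x* x‖ = 1 + ‖x‖²` for every norm-one `x` in a unital C*-algebra,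
then `u` is an isometry: `u* u = 1`. -/
theorem stmt5 {A : Type*} [CStarAlgebra A] (u : A)
    (h : ∀ x : A, ‖x‖ = 1 → ‖star u * u + star x * x‖ = 1 + ‖x‖ ^ 2) :
    star u * u = 1 := by
  nontriviality A
  set a := star u * u with ha_def
  have ha : IsSelfAdjoint a := IsSelfAdjoint.star_mul_self u
  have hspec0 : ∀ t ∈ spectrum ℝ a, (0:ℝ) ≤ t := spectrum_star_mul_self_nonneg
  have h1 : ‖a + 1‖ = 1 + 1 := by simpa using h 1 norm_one
  have hcfc1 : cfc (fun t : ℝ => t + 1) a = a + 1 := by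
    rw [cfc_add (a := a) (fun t : ℝ => t) (fun _ : ℝ => 1)
      continuous_id.continuousOn continuous_const.continuousOn,
      cfc_id' (R := ℝ) a ha, cfc_const_one ℝ a]
  have hgreat := IsGreatest.norm_cfc (𝕜 := ℝ) (fun t : ℝ => t + 1) a
    (by exact (continuous_id.add continuous_const).continuousOn) ha
  rw [hcfc1, h1] at hgreat
  have hle1 : ∀ t ∈ spectrum ℝ a, t ≤ 1 := by
    intro t ht
    have h2 : |t + 1| ≤ 1 + 1 := hgreat.2 ⟨t, ht, rfl⟩
    have := le_abs_self (t + 1)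
    linarith
  have hsub : spectrum ℝ a ⊆ {1} := by
    intro l hl
    have hl0 := hspec0 l hl
    have hl1 := hle1 l hl
    by_contra hne
    have hlt : l < 1 := lt_of_le_of_ne hl1 (by simpa using hne)
    set m : ℝ := (1 + l) / 2 with hm
    have hml : l < m := by rw [hm]; linarith
    have hm1 : m < 1 := by rw [hm]; linarith
    have hm0 : 0 ≤ m := by rw [hm]; linarith
    set f : ℝ → ℝ := fun t => max 0 (min 1 ((m - t) / (m - l))) with hf
    have hfc : Continuous f := by
      apply Continuous.max continuous_const
      exact Continuous.min continuous_const ((continuous_const.sub continuous_id).div_const _)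
    have hfl : f l = 1 := by
      simp only [hf]
      rw [div_self (by linarith)]
      norm_num
    have hf01 : ∀ t, 0 ≤ f t ∧ f t ≤ 1 := fun t =>
      ⟨le_max_left _ _, max_le (by norm_num) (min_le_left _ _)⟩
    have hfzero : ∀ t, m < t → f t = 0 := by
      intro t htm
      simp only [hf]
      have : (m - t) / (m - l) ≤ 0 :=
        div_nonpos_of_nonpos_of_nonneg (by linarith) (by linarith)
      rw [max_eq_left (le_trans (min_le_right _ _) this)]
    set x : A := cfc f a with hx
    have hxsa : IsSelfAdjoint x := cfc_predicate f a
    have hxnorm : ‖x‖ = 1 := by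
      apply le_antisymm
      · refine norm_cfc_le zero_le_one fun t _ => ?_
        rw [Real.norm_of_nonneg (hf01 t).1]; exact (hf01 t).2
      · have := norm_apply_le_norm_cfc f a hl hfc.continuousOn ha
        rw [hfl, norm_one] at this
        exact this
    have hxx : star x * x = cfc (fun t => f t * f t) a := by
      rw [hxsa.star_eq, hx, ← cfc_mul f f a hfc.continuousOn hfc.continuousOn]
    have hax : cfc (fun t => t + f t * f t) a = a + star x * x := by
      rw [cfc_add (a := a) (fun t : ℝ => t) (fun t => f t * f t)
          continuous_id.continuousOn (hfc.mul hfc).continuousOn,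
        cfc_id' (R := ℝ) a ha, hxx]
    have hbound : ‖a + star x * x‖ ≤ 1 + m := by
      rw [← hax]
      refine norm_cfc_le (by linarith) fun t ht => ?_
      have ht0 := hspec0 t ht
      have ht1 := hle1 t ht
      have hft := hf01 t
      rw [Real.norm_of_nonneg (by nlinarith [hft.1])]
      rcases le_or_gt t m with htc | htc
      · nlinarith [hft.1, hft.2]
      · rw [hfzero t htc]; linarith
    have hfinal := h x hxnorm
    rw [hxnorm] at hfinal
    norm_num at hfinal
    rw [ha_def] at hbound
    linarith
  exact CFC.eq_one_of_spectrum_subset_one (R := ℝ) a hsub ha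
end

section
/- Let A be a unital C*-algebra and x ∈ A. If there is a constant K ≥ 0 such that ‖1 + i t x‖² ≤ 1 + K t² for all real t, then x is selfadjoint. -/
/-!
Put `b = ℑ x` and `z = 1 + i t x`. Then `z⋆z = 1 - 2t b + t² x⋆x`, so the hypothesis and the
C⋆-identity `‖z‖² = ‖z⋆z‖` give `‖1 + s b‖ ≤ 1 + O(s²)`. As `b` is selfadjoint, `r = ±‖b‖` lies in
its real spectrum, so `1 + s r ∈ σ(1 + s b)` and `1 + s r ≤ 1 + O(s²)` for all real `s`; the linear
term must vanish, hence `‖b‖ = 0`.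
-/

open Complex ComplexStarModule

lemma eq_zero_of_forall_mul_le_mul_sq {a C : ℝ} (h : ∀ t : ℝ, a * t ≤ C * t ^ 2) : a = 0 := by
  have hC : 0 < |C| + 1 := by positivity
  have := h (a / (|C| + 1))
  rw [div_pow] at this
  field_simp at this
  nlinarith [le_abs_self C, sq_nonneg a, mul_nonneg (abs_nonneg C) (sq_nonneg a)]

open Polynomial in
lemma one_add_mul_le_norm_one_add_smul {A : Type*} [NormedRing A] [NormedAlgebra ℝ A]
    [NormOneClass A] [CompleteSpace A] {a : A} {r : ℝ} (hr : r ∈ spectrum ℝ a) (s : ℝ) :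
    1 + s * r ≤ ‖1 + s • a‖ := by
  have hmem := spectrum.subset_polynomial_aeval a (1 + C s * X) ⟨r, hr, rfl⟩
  simp only [eval_add, eval_one, eval_mul, eval_C, eval_X, map_add, map_one, map_mul,
    aeval_C, aeval_X, Algebra.algebraMap_eq_smul_one, smul_mul_assoc, one_mul] at hmem
  exact (le_abs_self _).trans (spectrum.norm_le_norm_of_mem hmem)

lemma IsSelfAdjoint.eq_zero_of_norm_one_add_smul_le {A : Type*} [CStarAlgebra A] {b : A}
    (hb : IsSelfAdjoint b) {C : ℝ} (h : ∀ t : ℝ, ‖1 + t • b‖ ≤ 1 + C * t ^ 2) : b = 0 := by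
  nontriviality A
  obtain ⟨r, hr, hr_norm⟩ : ∃ r ∈ spectrum ℝ b, |r| = ‖b‖ := by
    rcases CStarAlgebra.norm_or_neg_norm_mem_spectrum hb with h | h
    exacts [⟨_, h, abs_norm b⟩, ⟨_, h, by rw [abs_neg, abs_norm]⟩]
  have hr_zero : r = 0 := eq_zero_of_forall_mul_le_mul_sq (C := C) fun t ↦ by
    linarith [one_add_mul_le_norm_one_add_smul hr t, h t, mul_comm r t]
  rwa [hr_zero, abs_zero, eq_comm, norm_eq_zero] at hr_norm

lemma star_mul_self_one_add_ofReal_mul_I_smul {A : Type*} [Ring A] [StarRing A] [Algebra ℂ A]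
    [StarModule ℂ A] (x : A) (t : ℝ) :
    star (1 + (t * I) • x) * (1 + (t * I) • x) =
      1 - (2 * t) • (ℑ x : A) + t ^ 2 • (star x * x) := by
  simp only [imaginaryPart_apply_coe, star_add, star_one, star_smul, add_mul, mul_add, one_mul,
    mul_one, smul_mul_assoc, mul_smul_comm, smul_smul, smul_sub, ← Complex.coe_smul]
  match_scalars <;> simp [Complex.ext_iff, sq] <;> ring

lemma norm_one_sub_smul_imaginaryPart_le {A : Type*} [CStarAlgebra A] (x : A) (t : ℝ) :
    ‖1 - (2 * t) • (ℑ x : A)‖ ≤ ‖1 + (t * I) • x‖ ^ 2 + t ^ 2 * ‖x‖ ^ 2 := by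
  have h := norm_sub_le (star (1 + (t * I) • x) * (1 + (t * I) • x)) (t ^ 2 • (star x * x))
  rw [CStarRing.norm_star_mul_self (x := 1 + _), star_mul_self_one_add_ofReal_mul_I_smul,
    add_sub_cancel_right, norm_smul, CStarRing.norm_star_mul_self] at h
  simpa [sq, abs_mul_self] using h

theorem stmt7_general {A : Type*} [CStarAlgebra A] (x : A) (K : ℝ)
    (h : ∀ t : ℝ, ‖(1 : A) + ((t : ℂ) * Complex.I) • x‖ ^ 2 ≤ 1 + K * t ^ 2) :
    IsSelfAdjoint x := by
  refine imaginaryPart_eq_zero_iff.mp <| Subtype.ext <|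
    (ℑ x).2.eq_zero_of_norm_one_add_smul_le (C := (K + ‖x‖ ^ 2) / 4) fun t ↦ ?_
  calc ‖1 + t • (ℑ x : A)‖ = ‖1 - (2 * (-t / 2)) • (ℑ x : A)‖ := by
        rw [mul_div_cancel₀ _ two_ne_zero, neg_smul, sub_neg_eq_add]
    _ ≤ ‖1 + ((-t / 2 : ℝ) * I) • x‖ ^ 2 + (-t / 2) ^ 2 * ‖x‖ ^ 2 :=
      norm_one_sub_smul_imaginaryPart_le x _
    _ ≤ 1 + K * (-t / 2) ^ 2 + (-t / 2) ^ 2 * ‖x‖ ^ 2 := by gcongr; exact h _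
    _ = 1 + (K + ‖x‖ ^ 2) / 4 * t ^ 2 := by ring

/-- If `‖1 + i t x‖² ≤ 1 + K t²` for all real `t` (for some constant `K ≥ 0`),
then `x` is selfadjoint. -/
theorem stmt7 {A : Type*} [CStarAlgebra A] (x : A) (K : ℝ) (hK : 0 ≤ K)
    (h : ∀ t : ℝ, ‖(1 : A) + ((t : ℂ) * Complex.I) • x‖ ^ 2 ≤ 1 + K * t ^ 2) :
    IsSelfAdjoint x :=
  stmt7_general x K h
end

section
/- Let A be a unital C*-algebra and x ∈ A with ‖x‖ ≤ 1. Then x is selfadjoint if and only if for every real t, the 2×2 matrix [[t·1, x],[−x, t·1]] in M₂(A) has norm at most √(t² + 1). -/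
/-!
Write `T_t = [[t, x], [-x, t]]` and `z = (u, v)`. Expanding the square gives
`‖T_t z‖² = t²‖z‖² + ‖x u‖² + ‖x v‖² + 2t (re⟪u, x v⟫ - re⟪x u, v⟫)`.
If `x` is selfadjoint the term linear in `t` vanishes and `‖x‖ ≤ 1` bounds the rest by
`(t² + 1)‖z‖²`. Conversely, the bound for all `t` forces the coefficient of `t` to vanish, so
`re⟪u, x v⟫ = re⟪x u, v⟫` for all `u, v`; replacing `v` by `i v` gives the imaginary parts.
-/

open ContinuousLinearMap in
/-- The block operator `[[a, b], [c, d]]` on the Hilbert space `H ⊕₂ H`,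
realizing the canonical C*-norm on `M₂(B(H))`. -/
noncomputable def blockOp {H : Type*} [NormedAddCommGroup H] [InnerProductSpace ℂ H]
    (a b c d : H →L[ℂ] H) : WithLp 2 (H × H) →L[ℂ] WithLp 2 (H × H) :=
  (((WithLp.prodContinuousLinearEquiv 2 ℂ H H).symm : H × H →L[ℂ] WithLp 2 (H × H)).comp
    ((a.comp (fst ℂ H H) + b.comp (snd ℂ H H)).prod
      (c.comp (fst ℂ H H) + d.comp (snd ℂ H H)))).comp
    ((WithLp.prodContinuousLinearEquiv 2 ℂ H H) : WithLp 2 (H × H) →L[ℂ] H × H)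

theorem eq_zero_of_forall_mul_le {c C : ℝ} (h : ∀ t : ℝ, t * c ≤ C) : c = 0 := by
  by_contra hc
  have := h ((C + 1) / c)
  rw [div_mul_cancel₀ _ hc] at this
  linarith

namespace ContinuousLinearMap

variable {E F : Type*} [SeminormedAddCommGroup E] [SeminormedAddCommGroup F]
  [NormedSpace ℂ E] [NormedSpace ℂ F]

theorem opNorm_le_sqrt_iff {f : E →L[ℂ] F} {c : ℝ} (hc : 0 ≤ c) :
    ‖f‖ ≤ √c ↔ ∀ z, ‖f z‖ ^ 2 ≤ c * ‖z‖ ^ 2 := by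
  rw [opNorm_le_iff (Real.sqrt_nonneg c)]
  refine forall_congr' fun z => ?_
  rw [← pow_le_pow_iff_left₀ (norm_nonneg _) (by positivity) two_ne_zero, mul_pow,
    Real.sq_sqrt hc]

theorem norm_apply_sq_le_of_norm_le_one {f : E →L[ℂ] F} (hf : ‖f‖ ≤ 1) (z : E) :
    ‖f z‖ ^ 2 ≤ ‖z‖ ^ 2 := by
  have : ‖f z‖ ≤ ‖z‖ := (f.le_opNorm z).trans (mul_le_of_le_one_left (norm_nonneg z) hf)
  gcongr

end ContinuousLinearMap

section Hilbert

variable {H : Type*} [NormedAddCommGroup H] [InnerProductSpace ℂ H]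

local notation "⟪" x ", " y "⟫" => inner ℂ x y

theorem LinearMap.isSymmetric_of_re_inner_eq {T : H →ₗ[ℂ] H}
    (h : ∀ u v, (⟪u, T v⟫).re = (⟪T u, v⟫).re) : T.IsSymmetric := by
  intro u v
  apply Complex.ext
  · exact (h u v).symm
  · have hI := h u (Complex.I • v)
    rw [map_smul, inner_smul_right, inner_smul_right] at hI
    simpa using hI.symm

theorem norm_blockOp_apply_sq (a b c d : H →L[ℂ] H) (z : WithLp 2 (H × H)) :
    ‖blockOp a b c d z‖ ^ 2 = ‖a z.fst + b z.snd‖ ^ 2 + ‖c z.fst + d z.snd‖ ^ 2 := by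
  rw [WithLp.prod_norm_sq_eq_of_L2]
  simp [blockOp]

theorem norm_blockOp_antisymm_apply_sq (x : H →L[ℂ] H) (t : ℝ) (z : WithLp 2 (H × H)) :
    ‖blockOp ((t : ℂ) • 1) x (-x) ((t : ℂ) • 1) z‖ ^ 2 =
      t ^ 2 * ‖z‖ ^ 2 + (‖x z.fst‖ ^ 2 + ‖x z.snd‖ ^ 2) +
        2 * t * ((⟪z.fst, x z.snd⟫).re - (⟪x z.fst, z.snd⟫).re) := by
  have hrow₂ : (-x) z.fst + ((t : ℂ) • (1 : H →L[ℂ] H)) z.snd = (t : ℂ) • z.snd - x z.fst := by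
    simp only [neg_apply, smul_apply, one_apply_eq_self]
    abel
  have hsymm : (⟪z.snd, x z.fst⟫).re = (⟪x z.fst, z.snd⟫).re := by
    simpa using inner_re_symm (𝕜 := ℂ) z.snd (x z.fst)
  rw [norm_blockOp_apply_sq, WithLp.prod_norm_sq_eq_of_L2, hrow₂]
  simp only [smul_apply, one_apply_eq_self]
  rw [@norm_add_sq ℂ, @norm_sub_sq ℂ]
  simp only [RCLike.re_to_complex, inner_smul_left, Complex.conj_ofReal, Complex.re_ofReal_mul,
    hsymm, norm_smul, Complex.norm_real, Real.norm_eq_abs, mul_pow, sq_abs]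
  ring

theorem norm_blockOp_antisymm_le_sqrt_iff (x : H →L[ℂ] H) (t : ℝ) :
    ‖blockOp ((t : ℂ) • 1) x (-x) ((t : ℂ) • 1)‖ ≤ √(t ^ 2 + 1) ↔
      ∀ u v : H, ‖x u‖ ^ 2 + ‖x v‖ ^ 2 + 2 * t * ((⟪u, x v⟫).re - (⟪x u, v⟫).re) ≤
        ‖u‖ ^ 2 + ‖v‖ ^ 2 := by
  rw [ContinuousLinearMap.opNorm_le_sqrt_iff (by positivity)]
  constructor
  · intro h u v
    have := h (WithLp.toLp 2 (u, v))
    rw [norm_blockOp_antisymm_apply_sq, WithLp.prod_norm_sq_eq_of_L2] at this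
    simp only [WithLp.toLp_fst, WithLp.toLp_snd] at this
    linarith
  · intro h z
    rw [norm_blockOp_antisymm_apply_sq, WithLp.prod_norm_sq_eq_of_L2]
    linarith [h z.fst z.snd]

end Hilbert

/-- A contraction `x ∈ B(H)` is selfadjoint iff `‖[[t·1, x], [-x, t·1]]‖ ≤ √(t² + 1)`
for all real `t`. -/
theorem stmt10 {H : Type*} [NormedAddCommGroup H] [InnerProductSpace ℂ H] [CompleteSpace H]
    (x : H →L[ℂ] H) (hx : ‖x‖ ≤ 1) :
    IsSelfAdjoint x ↔
      ∀ t : ℝ, ‖blockOp ((t : ℂ) • 1) x (-x) ((t : ℂ) • 1)‖ ≤ Real.sqrt (t ^ 2 + 1) := by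
  simp only [norm_blockOp_antisymm_le_sqrt_iff]
  constructor
  · intro hsa t u v
    have hsym : inner ℂ u (x v) = inner ℂ (x u) v := (hsa.isSymmetric u v).symm
    rw [hsym, sub_self, mul_zero, add_zero]
    exact add_le_add (x.norm_apply_sq_le_of_norm_le_one hx u)
      (x.norm_apply_sq_le_of_norm_le_one hx v)
  · intro h
    refine LinearMap.IsSymmetric.isSelfAdjoint <| LinearMap.isSymmetric_of_re_inner_eq fun u v => ?_
    have hlin : ∀ t : ℝ, t * (2 * ((inner ℂ u (x v)).re - (inner ℂ (x u) v).re)) ≤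
        ‖u‖ ^ 2 + ‖v‖ ^ 2 - (‖x u‖ ^ 2 + ‖x v‖ ^ 2) := fun t => by
      linarith [h t u v]
    have := eq_zero_of_forall_mul_le hlin
    simp only [ContinuousLinearMap.coe_coe]
    linarith
end

section
/- Let H be a Hilbert space and X a closed subspace of B(H) containing the identity I, and let v ∈ X be a unitary operator on H. Suppose that for every y ∈ X with ‖y‖ ≤ 1 and every t > 0, inf{ ‖[[t·I, y],[z, t·v]]‖ : z ∈ X, ‖z‖ ≤ 1 } ≤ √(t² + 1). Then v y* ∈ X for every y ∈ X, i.e. v X* ⊆ X. -/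
open ContinuousLinearMap RCLike
open scoped InnerProductSpace

section InnerProduct
variable {𝕜 E F : Type*} [RCLike 𝕜] [NormedAddCommGroup E] [InnerProductSpace 𝕜 E]
  [NormedAddCommGroup F] [InnerProductSpace 𝕜 F]

lemma norm_ofReal_smul_add_sq (t : ℝ) (a b : E) :
    ‖(t : 𝕜) • a + b‖ ^ 2 = t ^ 2 * ‖a‖ ^ 2 + 2 * t * re ⟪a, b⟫_𝕜 + ‖b‖ ^ 2 := by
  rw [norm_add_sq (𝕜 := 𝕜), inner_smul_left, conj_ofReal, re_ofReal_mul, norm_smul,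
    norm_ofReal, mul_pow, sq_abs]
  ring

lemma opNorm_le_of_two_mul_re_inner_le (w : E →L[𝕜] F) {C : ℝ} (hC : 0 ≤ C)
    (h : ∀ ξ η, 2 * re ⟪ξ, w η⟫_𝕜 ≤ C * (‖ξ‖ ^ 2 + ‖η‖ ^ 2)) : ‖w‖ ≤ C := by
  refine opNorm_le_bound w hC fun η => ?_
  rcases eq_or_ne (w η) 0 with hwη | hwη
  · rw [hwη, norm_zero]; positivity
  have hwη_pos : 0 < ‖w η‖ := norm_pos_iff.mpr hwη
  have hη_pos : 0 < ‖η‖ := norm_pos_iff.mpr fun hη => hwη (by rw [hη, map_zero])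
  set s : ℝ := ‖η‖ / ‖w η‖
  have hs : s * ‖w η‖ = ‖η‖ := div_mul_cancel₀ _ hwη_pos.ne'
  have hξ : ‖(s : 𝕜) • w η‖ = ‖η‖ := by
    rw [norm_smul, norm_ofReal, abs_of_nonneg (by positivity), hs]
  have hre : re ⟪(s : 𝕜) • w η, w η⟫_𝕜 = ‖η‖ * ‖w η‖ := by
    rw [inner_smul_left, conj_ofReal, re_ofReal_mul, inner_self_eq_norm_sq, ← hs]
    ring
  have := h ((s : 𝕜) • w η) η
  rw [hre, hξ] at this
  nlinarith
end InnerProduct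

lemma WithLp.norm_toLp_prod_sq {α β : Type*} [SeminormedAddCommGroup α]
    [SeminormedAddCommGroup β] (a : α) (b : β) : ‖WithLp.toLp 2 (a, b)‖ ^ 2 = ‖a‖ ^ 2 + ‖b‖ ^ 2 :=
  WithLp.prod_norm_sq_eq_of_L2 _

section BlockOp
variable {H : Type*} [NormedAddCommGroup H] [InnerProductSpace ℂ H]

lemma blockOp_apply (a b c d : H →L[ℂ] H) (ξ η : H) :
    blockOp a b c d (WithLp.toLp 2 (ξ, η)) = WithLp.toLp 2 (a ξ + b η, c ξ + d η) :=
  rfl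

variable [CompleteSpace H]

lemma sq_mul_add_re_inner_le_norm_blockOp_apply_sq {v : H →L[ℂ] H} (hv : ∀ x, ‖v x‖ = ‖x‖)
    (y z : H →L[ℂ] H) (t : ℝ) (ξ η : H) :
    t ^ 2 * (‖ξ‖ ^ 2 + ‖η‖ ^ 2) + 2 * t * re ⟪ξ, (y + star z * v) η⟫_ℂ
      ≤ ‖blockOp ((t : ℂ) • 1) y z ((t : ℂ) • v) (WithLp.toLp 2 (ξ, η))‖ ^ 2 := by
  have hcross : re ⟪ξ, (y + star z * v) η⟫_ℂ = re ⟪ξ, y η⟫_ℂ + re ⟪v η, z ξ⟫_ℂ := by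
    rw [add_apply, inner_add_right, map_add, mul_apply_eq_comp, star_eq_adjoint,
      adjoint_inner_right, inner_re_symm (𝕜 := ℂ) (z ξ)]
  rw [blockOp_apply, WithLp.norm_toLp_prod_sq, hcross, add_comm (z ξ)]
  simp only [smul_apply, one_apply_eq_self]
  rw [← RCLike.ofReal_eq_complex_ofReal, norm_ofReal_smul_add_sq, norm_ofReal_smul_add_sq, hv]
  nlinarith [sq_nonneg ‖y η‖, sq_nonneg ‖z ξ‖]

lemma norm_add_star_mul_le_of_norm_blockOp_le {v y z : H →L[ℂ] H} (hv : ∀ x, ‖v x‖ = ‖x‖)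
    {t K : ℝ} (ht : 0 < t) (htK : t ≤ K)
    (hM : ‖blockOp ((t : ℂ) • 1) y z ((t : ℂ) • v)‖ ≤ K) :
    ‖y + star z * v‖ ≤ (K ^ 2 - t ^ 2) / t := by
  refine opNorm_le_of_two_mul_re_inner_le _ (div_nonneg (by nlinarith) ht.le) fun ξ η => ?_
  have lower := sq_mul_add_re_inner_le_norm_blockOp_apply_sq hv y z t ξ η
  have upper : ‖blockOp ((t : ℂ) • 1) y z ((t : ℂ) • v) (WithLp.toLp 2 (ξ, η))‖ ^ 2
      ≤ K ^ 2 * (‖ξ‖ ^ 2 + ‖η‖ ^ 2) := by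
    rw [← WithLp.norm_toLp_prod_sq, ← mul_pow]
    gcongr
    exact (le_opNorm _ _).trans (by gcongr)
  rw [div_mul_eq_mul_div, le_div_iff₀ ht]
  nlinarith
end BlockOp

section Scaling
variable {E F : Type*} [NormedAddCommGroup E] [NormedSpace ℝ E] [AddCommGroup F] [Module ℝ F]

lemma Submodule.forall_map_mem_of_forall_norm_le_one {Y : Submodule ℝ E} {X : Submodule ℝ F}
    (f : E → F) (hf : ∀ (r : ℝ) y, f (r • y) = r • f y)
    (h : ∀ y ∈ Y, ‖y‖ ≤ 1 → f y ∈ X) : ∀ y ∈ Y, f y ∈ X := by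
  intro y hy
  rcases le_or_gt ‖y‖ 1 with hy1 | hy1
  · exact h y hy hy1
  have hy0 : ‖y‖ ≠ 0 := by positivity
  have hunit := h (‖y‖⁻¹ • y) (Y.smul_mem _ hy) (by rw [norm_smul, norm_inv, norm_norm,
    inv_mul_cancel₀ hy0])
  simpa [hf, smul_smul, hy0] using X.smul_mem ‖y‖ hunit
end Scaling

lemma unitary_mul_star_mem_of_forall_sInf_le {H : Type*} [NormedAddCommGroup H]
    [InnerProductSpace ℂ H] [CompleteSpace H] {X : Submodule ℂ (H →L[ℂ] H)}
    (hX : IsClosed (X : Set (H →L[ℂ] H))) {v y : H →L[ℂ] H} (hv : v ∈ unitary (H →L[ℂ] H))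
    (hy : ∀ t : ℝ, 0 < t →
      sInf {r : ℝ | ∃ z ∈ X, ‖z‖ ≤ 1 ∧ r = ‖blockOp ((t : ℂ) • 1) y z ((t : ℂ) • v)‖}
        ≤ Real.sqrt (t ^ 2 + 1)) :
    v * star y ∈ X := by
  suffices v * star y ∈ closure (X : Set (H →L[ℂ] H)) by rwa [hX.closure_eq] at this
  refine Metric.mem_closure_iff.mpr fun ε hε => ?_
  set t : ℝ := 3 / ε
  have ht : 0 < t := by positivity
  -- `K = √(t² + 2)` exceeds the infimum and has `(K² - t²) / t = 2 / t`.
  obtain ⟨_, ⟨z, hzX, -, rfl⟩, hzK⟩ := exists_lt_of_csInf_lt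
    (by exact ⟨_, 0, X.zero_mem, norm_zero.trans_le zero_le_one, rfl⟩)
    ((hy t ht).trans_lt (Real.sqrt_lt_sqrt (by positivity) (by linarith : t ^ 2 + 1 < t ^ 2 + 2)))
  have htK : t ≤ Real.sqrt (t ^ 2 + 2) := Real.le_sqrt_of_sq_le (by linarith)
  refine ⟨-z, X.neg_mem hzX, ?_⟩
  calc dist (v * star y) (-z) = ‖v * star (y + star z * v)‖ := by
        rw [dist_eq_norm, sub_neg_eq_add, star_add, star_mul, star_star, mul_add, ← mul_assoc,
          Unitary.mul_star_self_of_mem hv, one_mul]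
    _ = ‖y + star z * v‖ := by
        rw [CStarRing.norm_coe_unitary_mul ⟨v, hv⟩, norm_star]
    _ ≤ (Real.sqrt (t ^ 2 + 2) ^ 2 - t ^ 2) / t :=
        norm_add_star_mul_le_of_norm_blockOp_le (norm_map_of_mem_unitary hv) ht htK hzK.le
    _ < ε := by
        rw [Real.sq_sqrt (by positivity), add_sub_cancel_left, div_lt_iff₀ ht,
          mul_div_cancel₀ 3 hε.ne']
        norm_num

theorem stmt15_general {H : Type*} [NormedAddCommGroup H] [InnerProductSpace ℂ H] [CompleteSpace H]
    (X : Submodule ℂ (H →L[ℂ] H)) (hX : IsClosed (X : Set (H →L[ℂ] H)))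
    (v : H →L[ℂ] H) (hv : v ∈ unitary (H →L[ℂ] H))
    (h : ∀ y ∈ X, ‖y‖ ≤ 1 → ∀ t : ℝ, 0 < t →
      sInf {r : ℝ | ∃ z ∈ X, ‖z‖ ≤ 1 ∧ r = ‖blockOp ((t : ℂ) • 1) y z ((t : ℂ) • v)‖}
        ≤ Real.sqrt (t ^ 2 + 1)) :
    ∀ y ∈ X, v * star y ∈ X :=
  Submodule.forall_map_mem_of_forall_norm_le_one (Y := X.restrictScalars ℝ)
    (X := X.restrictScalars ℝ) (fun y => v * star y)
    (fun r y => by rw [star_smul, star_trivial, mul_smul_comm])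
    fun y hy hy1 => unitary_mul_star_mem_of_forall_sInf_le hX hv (h y hy hy1)

/-- If `X` is a closed unital subspace of `B(H)`, `v ∈ X` is a unitary, and for each
contraction `y ∈ X` and `t > 0`,
`inf { ‖[[t·I, y], [z, t·v]]‖ : z ∈ X, ‖z‖ ≤ 1 } ≤ √(t² + 1)`, then `v X* ⊆ X`. -/
theorem stmt15 {H : Type*} [NormedAddCommGroup H] [InnerProductSpace ℂ H] [CompleteSpace H]
    (X : Submodule ℂ (H →L[ℂ] H)) (hX : IsClosed (X : Set (H →L[ℂ] H)))
    (h1 : (1 : H →L[ℂ] H) ∈ X)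
    (v : H →L[ℂ] H) (hv : v ∈ unitary (H →L[ℂ] H)) (hvX : v ∈ X)
    (h : ∀ y ∈ X, ‖y‖ ≤ 1 → ∀ t : ℝ, 0 < t →
      sInf {r : ℝ | ∃ z ∈ X, ‖z‖ ≤ 1 ∧ r = ‖blockOp ((t : ℂ) • 1) y z ((t : ℂ) • v)‖}
        ≤ Real.sqrt (t ^ 2 + 1)) :
    ∀ y ∈ X, v * star y ∈ X :=
  stmt15_general X hX v hv h
end

section
/- Let K be a compact Hausdorff space and f ∈ C(K). Then sup{ ‖s·f + t·1‖_∞ : s, t ∈ ℂ, |s|² + |t|² = 1 } = √(1 + ‖f‖_∞²). In particular, if ‖f‖_∞ = 1 this supremum equals √2. -/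
/-!
By Cauchy–Schwarz, `‖s f(x) + t‖ ≤ √(‖s‖² + ‖t‖²) √(1 + ‖f(x)‖²)` at every point, so every value is
at most `√(1 + ‖f‖²)`. At a point `x` where `‖f‖` is attained, the unit vector
`(s, t) = (conj (f x), 1) / √(1 + ‖f‖²)` is the equality case, so the supremum is a maximum.
-/

open Complex ComplexConjugate

theorem Complex.norm_mul_add_le_sqrt_mul_sqrt (s t z : ℂ) :
    ‖s * z + t‖ ≤ √(‖s‖ ^ 2 + ‖t‖ ^ 2) * √(1 + ‖z‖ ^ 2) :=
  calc ‖s * z + t‖ ≤ ‖s‖ * ‖z‖ + ‖t‖ * 1 := by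
        simpa only [norm_mul, mul_one] using norm_add_le (s * z) t
    _ ≤ √(‖s‖ ^ 2 + ‖t‖ ^ 2) * √(‖z‖ ^ 2 + 1) := by
        simpa [Fin.sum_univ_two] using
          Real.sum_mul_le_sqrt_mul_sqrt Finset.univ ![‖s‖, ‖t‖] ![‖z‖, 1]
    _ = √(‖s‖ ^ 2 + ‖t‖ ^ 2) * √(1 + ‖z‖ ^ 2) := by rw [add_comm (‖z‖ ^ 2)]

theorem Complex.exists_norm_sq_add_norm_sq_eq_one_mul_add_eq_sqrt (z : ℂ) :
    ∃ s t : ℂ, ‖s‖ ^ 2 + ‖t‖ ^ 2 = 1 ∧ s * z + t = √(1 + ‖z‖ ^ 2) := by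
  set R := √(1 + ‖z‖ ^ 2)
  have hR_sq : R ^ 2 = 1 + ‖z‖ ^ 2 := Real.sq_sqrt (by positivity)
  have hR_pos : 0 < R := Real.sqrt_pos.mpr (by positivity)
  have hR_ne : (R : ℂ) ≠ 0 := ofReal_ne_zero.mpr hR_pos.ne'
  refine ⟨conj z / R, 1 / R, ?_, ?_⟩
  · simp only [norm_div, norm_conj, norm_one, norm_real, Real.norm_of_nonneg hR_pos.le]
    field_simp
    linarith
  · have hz : conj z * z = ((‖z‖ ^ 2 : ℝ) : ℂ) := by
      rw [mul_comm, mul_conj, normSq_eq_norm_sq]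
    rw [div_mul_eq_mul_div, hz, ← add_div, div_eq_iff hR_ne]
    norm_cast
    linarith

theorem ContinuousMap.exists_norm_apply_eq_norm {K E : Type*} [TopologicalSpace K]
    [CompactSpace K] [Nonempty K] [SeminormedAddCommGroup E] (f : C(K, E)) :
    ∃ x, ‖f x‖ = ‖f‖ := by
  obtain ⟨x, -, hx⟩ :=
    isCompact_univ.exists_isMaxOn Set.univ_nonempty (map_continuous f).norm.continuousOn
  exact ⟨x, le_antisymm (f.norm_coe_le_norm x)
    ((f.norm_le (norm_nonneg _)).mpr fun y ↦ hx (Set.mem_univ y))⟩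

theorem ContinuousMap.norm_smul_add_smul_one_le {K : Type*} [TopologicalSpace K]
    [CompactSpace K] (f : C(K, ℂ)) (s t : ℂ) :
    ‖s • f + t • (1 : C(K, ℂ))‖ ≤ √(‖s‖ ^ 2 + ‖t‖ ^ 2) * √(1 + ‖f‖ ^ 2) := by
  refine (norm_le _ (by positivity)).mpr fun x ↦ ?_
  calc ‖(s • f + t • (1 : C(K, ℂ))) x‖ = ‖s * f x + t‖ := by simp
    _ ≤ √(‖s‖ ^ 2 + ‖t‖ ^ 2) * √(1 + ‖f x‖ ^ 2) := norm_mul_add_le_sqrt_mul_sqrt s t (f x)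
    _ ≤ √(‖s‖ ^ 2 + ‖t‖ ^ 2) * √(1 + ‖f‖ ^ 2) := by
      gcongr
      exact f.norm_coe_le_norm x

theorem ContinuousMap.isGreatest_norm_smul_add_smul_one {K : Type*} [TopologicalSpace K]
    [CompactSpace K] [Nonempty K] (f : C(K, ℂ)) :
    IsGreatest {r : ℝ | ∃ s t : ℂ, ‖s‖ ^ 2 + ‖t‖ ^ 2 = 1 ∧ r = ‖s • f + t • (1 : C(K, ℂ))‖}
      (√(1 + ‖f‖ ^ 2)) := by
  have h_le {s t : ℂ} (hst : ‖s‖ ^ 2 + ‖t‖ ^ 2 = 1) :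
      ‖s • f + t • (1 : C(K, ℂ))‖ ≤ √(1 + ‖f‖ ^ 2) := by
    simpa [hst] using f.norm_smul_add_smul_one_le s t
  refine ⟨?_, fun r ⟨s, t, hst, hr⟩ ↦ hr ▸ h_le hst⟩
  obtain ⟨x, hx⟩ := f.exists_norm_apply_eq_norm
  obtain ⟨s, t, hst, hval⟩ := exists_norm_sq_add_norm_sq_eq_one_mul_add_eq_sqrt (f x)
  refine ⟨s, t, hst, le_antisymm ?_ (h_le hst)⟩
  calc √(1 + ‖f‖ ^ 2) = ‖(s • f + t • (1 : C(K, ℂ))) x‖ := by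
        simp [hval, hx, abs_of_nonneg (Real.sqrt_nonneg _)]
    _ ≤ _ := norm_coe_le_norm _ x

theorem stmt17_general {K : Type*} [TopologicalSpace K] [CompactSpace K] [Nonempty K]
    (f : C(K, ℂ)) :
    sSup {r : ℝ | ∃ s t : ℂ, ‖s‖ ^ 2 + ‖t‖ ^ 2 = 1 ∧ r = ‖s • f + t • (1 : C(K, ℂ))‖}
      = Real.sqrt (1 + ‖f‖ ^ 2) :=
  f.isGreatest_norm_smul_add_smul_one.csSup_eq

/-- For `f ∈ C(K)`, `sup { ‖s f + t 1‖ : |s|² + |t|² = 1 } = √(1 + ‖f‖²)`. -/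
theorem stmt17 {K : Type*} [TopologicalSpace K] [CompactSpace K] [T2Space K] [Nonempty K]
    (f : C(K, ℂ)) :
    sSup {r : ℝ | ∃ s t : ℂ, ‖s‖ ^ 2 + ‖t‖ ^ 2 = 1 ∧ r = ‖s • f + t • (1 : C(K, ℂ))‖}
      = Real.sqrt (1 + ‖f‖ ^ 2) :=
  stmt17_general f
end
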